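/- Let U be a set with a height function h : U → ℝ satisfying h(x) ≥ 1 for all x ∈ U, such that the counting function N_U(B) = card{x ∈ U : h(x) ≤ B} is finite for every B > 0 (Northcott property) and N_U(B) → ∞ as B → ∞. Let V ⊆ U be a subset such that liminf_{B→∞} N_V(B)/N_U(B) > 0, where N_V(B) = card{x ∈ V : h(x) ≤ B}. Then the convergence boundaries agree: σ(V) = σ(U). -/

import Mathlib

open Filter
open scoped ENNReal

/-- The convergence boundary `σ(S)` of a subset `S ⊆ U` with respect to a height function
`h : U → ℝ`: the infimum in `[0,∞]` of the set of positive real numbers `s` for which the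
series `∑_{x ∈ S} h(x)^{-s}` converges (equal to `∞` if no such `s` exists). -/
noncomputable def convBoundarySet {U : Type*} (h : U → ℝ) (S : Set U) : ℝ≥0∞ :=
  sInf (ENNReal.ofReal '' {s : ℝ | 0 < s ∧ Summable fun x : S => h x.1 ^ (-s)})

/-- The counting function `N_S(B) = card {x ∈ S | h(x) ≤ B}`, as a real number. -/
noncomputable def heightCount {U : Type*} (h : U → ℝ) (S : Set U) (B : ℝ) : ℝ :=
  (Nat.card {x : U | x ∈ S ∧ h x ≤ B} : ℝ)

/-- If `∑_{x ∈ V} h(x)^{-s}` converges then `N_V(B) = O(B^s)`. -/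
lemma count_le_of_summable {U : Type*} {h : U → ℝ} (hh : ∀ x, 1 ≤ h x)
    (hfin : ∀ B : ℝ, 0 < B → {x : U | h x ≤ B}.Finite)
    {V : Set U} {s : ℝ} (hs : 0 < s)
    (hsum : Summable fun x : V => h x.1 ^ (-s)) :
    ∃ C : ℝ, 0 < C ∧ ∀ B : ℝ, 1 ≤ B → heightCount h V B ≤ C * B ^ s := by
  set C : ℝ := max 1 (∑' x : V, h x.1 ^ (-s)) with hC
  refine ⟨C, lt_of_lt_of_le one_pos (le_max_left _ _), fun B hB => ?_⟩
  have hBpos : (0:ℝ) < B := lt_of_lt_of_le one_pos hB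
  have hBs : (0:ℝ) < B ^ s := Real.rpow_pos_of_pos hBpos s
  have hfinW : {x : V | h x.1 ≤ B}.Finite := by
    have : {x : V | h x.1 ≤ B} = (fun x : V => (x : U)) ⁻¹' {x : U | h x ≤ B} := rfl
    rw [this]
    exact Set.Finite.preimage Subtype.val_injective.injOn (hfin B hBpos)
  have hcard : heightCount h V B = (hfinW.toFinset.card : ℝ) := by
    have h1 : Nat.card {x : U | x ∈ V ∧ h x ≤ B} = Nat.card {x : V | h x.1 ≤ B} :=
      Nat.card_congr (Equiv.Set.sep V (fun x => h x ≤ B))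
    have h2 : Nat.card {x : V | h x.1 ≤ B} = hfinW.toFinset.card := by
      rw [Nat.card_coe_set_eq, Set.ncard_eq_toFinset_card _ hfinW]
    rw [heightCount, h1, h2]
  -- the finite sum is at most the whole sum
  have hsumle : ∑ x ∈ hfinW.toFinset, h x.1 ^ (-s) ≤ ∑' x : V, h x.1 ^ (-s) :=
    Summable.sum_le_tsum _ (fun i _ => Real.rpow_nonneg (le_trans zero_le_one (hh i.1)) _) hsum
  -- each term is at least B ^ (-s)
  have hterm : ∀ x ∈ hfinW.toFinset, B ^ (-s) ≤ h x.1 ^ (-s) := by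
    intro x hx
    rw [Set.Finite.mem_toFinset] at hx
    rw [Real.rpow_neg hBpos.le, Real.rpow_neg (le_trans zero_le_one (hh x.1))]
    exact inv_anti₀ (Real.rpow_pos_of_pos (lt_of_lt_of_le one_pos (hh x.1)) _)
      (Real.rpow_le_rpow (le_trans zero_le_one (hh x.1)) hx hs.le)
  have hlow : (hfinW.toFinset.card : ℝ) * B ^ (-s) ≤ ∑ x ∈ hfinW.toFinset, h x.1 ^ (-s) := by
    simpa [nsmul_eq_mul] using Finset.card_nsmul_le_sum hfinW.toFinset _ _ hterm
  have h3 : (hfinW.toFinset.card : ℝ) * B ^ (-s) ≤ C :=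
    le_trans (hlow.trans hsumle) (le_max_right _ _)
  have h4 := mul_le_mul_of_nonneg_right h3 hBs.le
  rw [mul_assoc, Real.rpow_neg hBpos.le, inv_mul_cancel₀ hBs.ne', mul_one] at h4
  rw [hcard]
  exact h4

/-- If `N_U(B) ≤ C B^s` for all `B ≥ 1`, then `∑_{x ∈ U} h(x)^{-s'}` converges
whenever `s' > s`. -/
lemma summable_of_count_le {U : Type*} {h : U → ℝ} (hh : ∀ x, 1 ≤ h x)
    (hfin : ∀ B : ℝ, 0 < B → {x : U | h x ≤ B}.Finite)
    {s s' C : ℝ} (hs : 0 ≤ s) (hss' : s < s')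
    (hcount : ∀ B : ℝ, 1 ≤ B → heightCount h Set.univ B ≤ C * B ^ s) :
    Summable fun x : U => h x ^ (-s') := by
  have hs'0 : 0 ≤ s' := hs.trans hss'.le
  have hC0 : 0 ≤ C := by
    have h1 := hcount 1 le_rfl
    rw [Real.one_rpow, mul_one] at h1
    exact le_trans (Nat.cast_nonneg _) h1
  set r : ℝ := (2:ℝ) ^ (s - s') with hr
  have hr0 : 0 ≤ r := Real.rpow_nonneg (by norm_num) _
  have hr1 : r < 1 := Real.rpow_lt_one_of_one_lt_of_neg one_lt_two (by linarith)
  set M : ℝ := C * (2:ℝ) ^ s with hM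
  have hM0 : 0 ≤ M := mul_nonneg hC0 (Real.rpow_nonneg (by norm_num) _)
  -- dyadic pieces
  set D : ℕ → Set U := fun k => {x : U | (2:ℝ) ^ k ≤ h x ∧ h x ≤ (2:ℝ) ^ (k + 1)} with hD
  have hcover : (⋃ k, D k) = (Set.univ : Set U) := by
    refine Set.eq_univ_of_forall fun x => ?_
    have hx1 : (1:ℝ) ≤ h x := hh x
    have hex : ∃ n : ℕ, h x < 2 ^ (n + 1) := by
      obtain ⟨n, hn⟩ := pow_unbounded_of_one_lt (h x) (one_lt_two (α := ℝ))
      exact ⟨n, hn.trans_le (pow_le_pow_right₀ one_le_two (Nat.le_succ n))⟩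
    have hup : h x ≤ 2 ^ (Nat.find hex + 1) := (Nat.find_spec hex).le
    have hlow : (2:ℝ) ^ (Nat.find hex) ≤ h x := by
      rcases Nat.eq_zero_or_pos (Nat.find hex) with hk | hk
      · simpa [hk] using hx1
      · obtain ⟨m, hm⟩ := Nat.exists_eq_succ_of_ne_zero hk.ne'
        have := Nat.find_min hex (m := m) (by omega)
        rw [hm]
        exact le_of_not_gt this
    exact Set.mem_iUnion.2 ⟨Nat.find hex, hlow, hup⟩
  -- bound on each dyadic piece
  have key : ∀ k : ℕ, (∑' x : D k, ENNReal.ofReal (h x.1 ^ (-s')))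
      ≤ ENNReal.ofReal (M * r ^ k) := by
    intro k
    have hpos : (0:ℝ) < 2 ^ (k + 1) := by positivity
    have hone : (1:ℝ) ≤ 2 ^ (k + 1) := one_le_pow₀ one_le_two
    have hfinD : (D k).Finite := (hfin _ hpos).subset fun x hx => hx.2
    haveI := hfinD.fintype
    rw [tsum_fintype]
    have hterm : ∀ x : D k,
        ENNReal.ofReal (h x.1 ^ (-s')) ≤ ENNReal.ofReal (((2:ℝ) ^ k) ^ (-s')) := by
      intro x
      apply ENNReal.ofReal_le_ofReal
      rw [Real.rpow_neg (le_trans zero_le_one (hh x.1)), Real.rpow_neg (by positivity)]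
      exact inv_anti₀ (Real.rpow_pos_of_pos (by positivity) _)
        (Real.rpow_le_rpow (by positivity) x.2.1 hs'0)
    have hsum1 : ∑ x : D k, ENNReal.ofReal (h x.1 ^ (-s'))
        ≤ (Fintype.card (D k)) • ENNReal.ofReal (((2:ℝ) ^ k) ^ (-s')) := by
      simpa [Finset.card_univ] using
        Finset.sum_le_card_nsmul Finset.univ _ _ (fun x _ => hterm x)
    have hcardle : (Fintype.card (D k) : ℝ) ≤ C * ((2:ℝ) ^ (k + 1)) ^ s := by
      have hfin2 : {x : U | x ∈ Set.univ ∧ h x ≤ 2 ^ (k + 1)}.Finite :=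
        (hfin _ hpos).subset fun x hx => hx.2
      have h1 : Nat.card (D k) ≤ Nat.card {x : U | x ∈ Set.univ ∧ h x ≤ 2 ^ (k + 1)} := by
        rw [Nat.card_coe_set_eq, Nat.card_coe_set_eq]
        exact Set.ncard_le_ncard (fun x hx => ⟨trivial, hx.2⟩) hfin2
      have h2 : heightCount h Set.univ (2 ^ (k + 1)) ≤ C * ((2:ℝ) ^ (k + 1)) ^ s :=
        hcount _ hone
      calc (Fintype.card (D k) : ℝ) = (Nat.card (D k) : ℝ) := by
            rw [Nat.card_eq_fintype_card]
        _ ≤ (Nat.card {x : U | x ∈ Set.univ ∧ h x ≤ 2 ^ (k + 1)} : ℝ) := by exact_mod_cast h1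
        _ ≤ C * ((2:ℝ) ^ (k + 1)) ^ s := h2
    have hid2 : ((2:ℝ) ^ (k + 1)) ^ s * ((2:ℝ) ^ k) ^ (-s') = (2:ℝ) ^ s * r ^ k := by
      rw [hr, ← Real.rpow_natCast (2:ℝ) (k + 1), ← Real.rpow_natCast (2:ℝ) k,
        ← Real.rpow_natCast ((2:ℝ) ^ (s - s')) k,
        ← Real.rpow_mul (by norm_num : (0:ℝ) ≤ 2),
        ← Real.rpow_mul (by norm_num : (0:ℝ) ≤ 2),
        ← Real.rpow_mul (by norm_num : (0:ℝ) ≤ 2),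
        ← Real.rpow_add (by norm_num : (0:ℝ) < 2),
        ← Real.rpow_add (by norm_num : (0:ℝ) < 2)]
      congr 1
      push_cast
      ring
    have hid : C * ((2:ℝ) ^ (k + 1)) ^ s * ((2:ℝ) ^ k) ^ (-s') = M * r ^ k := by
      rw [hM, mul_assoc, hid2]
      ring
    have hnn : (0:ℝ) ≤ ((2:ℝ) ^ k) ^ (-s') := Real.rpow_nonneg (by positivity) _
    calc ∑ x : D k, ENNReal.ofReal (h x.1 ^ (-s'))
        ≤ (Fintype.card (D k)) • ENNReal.ofReal (((2:ℝ) ^ k) ^ (-s')) := hsum1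
      _ = ENNReal.ofReal ((Fintype.card (D k) : ℝ) * ((2:ℝ) ^ k) ^ (-s')) := by
          rw [nsmul_eq_mul, ← ENNReal.ofReal_natCast (Fintype.card (D k)),
            ← ENNReal.ofReal_mul (Nat.cast_nonneg _)]
      _ ≤ ENNReal.ofReal (C * ((2:ℝ) ^ (k + 1)) ^ s * ((2:ℝ) ^ k) ^ (-s')) :=
          ENNReal.ofReal_le_ofReal (mul_le_mul_of_nonneg_right hcardle hnn)
      _ = ENNReal.ofReal (M * r ^ k) := by rw [hid]
  -- total bound in `ℝ≥0∞`
  have hgeom : Summable fun k : ℕ => M * r ^ k :=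
    (summable_geometric_of_lt_one hr0 hr1).mul_left M
  have htot : (∑' x : U, ENNReal.ofReal (h x ^ (-s'))) ≠ ⊤ := by
    have h1 : (∑' x : U, ENNReal.ofReal (h x ^ (-s')))
        = ∑' x : (⋃ k, D k : Set U), ENNReal.ofReal (h x.1 ^ (-s')) := by
      rw [← tsum_univ (fun x : U => ENNReal.ofReal (h x ^ (-s')))]
      exact (tsum_congr_set_coe (fun x : U => ENNReal.ofReal (h x ^ (-s'))) hcover).symm
    have h2 : (∑' x : (⋃ k, D k : Set U), ENNReal.ofReal (h x.1 ^ (-s')))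
        ≤ ∑' k : ℕ, ENNReal.ofReal (M * r ^ k) :=
      le_trans (ENNReal.tsum_iUnion_le_tsum (fun x : U => ENNReal.ofReal (h x ^ (-s'))) D)
        (ENNReal.tsum_le_tsum key)
    have h3 : (∑' k : ℕ, ENNReal.ofReal (M * r ^ k))
        = ENNReal.ofReal (∑' k : ℕ, M * r ^ k) :=
      (ENNReal.ofReal_tsum_of_nonneg (fun n => mul_nonneg hM0 (pow_nonneg hr0 n)) hgeom).symm
    rw [h1]
    exact ne_top_of_le_ne_top (by rw [h3]; exact ENNReal.ofReal_ne_top) h2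
  have hfinal := ENNReal.summable_toReal htot
  refine hfinal.congr fun x => ?_
  exact ENNReal.toReal_ofReal (Real.rpow_nonneg (le_trans zero_le_one (hh x)) _)

/-- A weakly accumulating subset (i.e. one with
`liminf_{B→∞} N_V(B)/N_U(B) > 0`) of a set with the Northcott property and infinitely
many points has the same convergence boundary as the whole set. -/
theorem convBoundary_of_weakly_accumulating {U : Type*} (h : U → ℝ)
    (hh : ∀ x, 1 ≤ h x)
    (hfin : ∀ B : ℝ, 0 < B → {x : U | h x ≤ B}.Finite)
    (htop : Tendsto (fun B => heightCount h Set.univ B) atTop atTop)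
    (V : Set U)
    (hacc : 0 < liminf (fun B => heightCount h V B / heightCount h Set.univ B) atTop) :
    convBoundarySet h V = convBoundarySet h Set.univ := by
  classical
  -- the easy inclusion of summability sets
  have hBA : {s : ℝ | 0 < s ∧ Summable fun x : (Set.univ : Set U) => h x.1 ^ (-s)}
      ⊆ {s : ℝ | 0 < s ∧ Summable fun x : V => h x.1 ^ (-s)} := by
    rintro s ⟨hs, hsum⟩
    refine ⟨hs, ?_⟩
    have h1 : Summable fun x : U => h x ^ (-s) :=
      ((Equiv.Set.univ U).summable_iff (f := fun x : U => h x ^ (-s))).mp hsum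
    exact h1.subtype V
  -- the key implication
  have hkey : ∀ s ∈ {s : ℝ | 0 < s ∧ Summable fun x : V => h x.1 ^ (-s)},
      ∀ s', s < s' →
      s' ∈ {s : ℝ | 0 < s ∧ Summable fun x : (Set.univ : Set U) => h x.1 ^ (-s)} := by
    rintro s ⟨hs, hsum⟩ s' hss'
    obtain ⟨C, hCpos, hCb⟩ := count_le_of_summable hh hfin hs hsum
    -- extract a positive accumulation constant
    set L := liminf (fun B => heightCount h V B / heightCount h Set.univ B) atTop with hL
    have hbdd : IsBoundedUnder (· ≥ ·) atTop
        (fun B => heightCount h V B / heightCount h Set.univ B) :=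
      isBoundedUnder_of ⟨0, fun B => div_nonneg (Nat.cast_nonneg _) (Nat.cast_nonneg _)⟩
    have hev1 : ∀ᶠ B in atTop,
        L / 2 < heightCount h V B / heightCount h Set.univ B :=
      eventually_lt_of_lt_liminf (by linarith) hbdd
    have hev2 : ∀ᶠ B in atTop, (1:ℝ) ≤ heightCount h Set.univ B :=
      htop.eventually_ge_atTop 1
    have hev : ∀ᶠ B in atTop,
        (L / 2) * heightCount h Set.univ B ≤ heightCount h V B := by
      filter_upwards [hev1, hev2] with B h1 h2
      have hpos : (0:ℝ) < heightCount h Set.univ B := lt_of_lt_of_le one_pos h2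
      exact ((lt_div_iff₀ hpos).mp h1).le
    obtain ⟨B1, hB1⟩ := (hev.and (eventually_ge_atTop 1)).exists_forall_of_atTop
    -- monotonicity of the counting function
    have hmono : ∀ B B' : ℝ, 0 < B' → B ≤ B' →
        heightCount h Set.univ B ≤ heightCount h Set.univ B' := by
      intro B B' hB' hBB'
      have hfin2 : {x : U | x ∈ Set.univ ∧ h x ≤ B'}.Finite :=
        (hfin B' hB').subset fun x hx => hx.2
      have : Nat.card {x : U | x ∈ Set.univ ∧ h x ≤ B}
          ≤ Nat.card {x : U | x ∈ Set.univ ∧ h x ≤ B'} := by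
        rw [Nat.card_coe_set_eq, Nat.card_coe_set_eq]
        exact Set.ncard_le_ncard (fun x hx => ⟨hx.1, hx.2.trans hBB'⟩) hfin2
      unfold heightCount
      exact_mod_cast this
    -- a bound valid for all B ≥ 1
    set B2 : ℝ := max B1 1 with hB2
    have hB2one : (1:ℝ) ≤ B2 := le_max_right _ _
    have hB2pos : (0:ℝ) < B2 := lt_of_lt_of_le one_pos hB2one
    have hLpos : (0:ℝ) < L / 2 := by linarith
    have hbig : ∀ B : ℝ, B2 ≤ B → heightCount h Set.univ B ≤ (C / (L / 2)) * B ^ s := by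
      intro B hB
      have hB1' : B1 ≤ B := le_trans (le_max_left _ _) hB
      have hBone : (1:ℝ) ≤ B := le_trans hB2one hB
      obtain ⟨hc1, _⟩ := hB1 B hB1'
      have h2 := hCb B hBone
      rw [div_mul_eq_mul_div, le_div_iff₀ hLpos]
      calc heightCount h Set.univ B * (L / 2) = (L / 2) * heightCount h Set.univ B := by ring
        _ ≤ heightCount h V B := hc1
        _ ≤ C * B ^ s := h2
    set C3 : ℝ := (C / (L / 2)) * B2 ^ s + C / (L / 2) with hC3
    have hCL0 : 0 ≤ C / (L / 2) := div_nonneg hCpos.le hLpos.le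
    have hbound : ∀ B : ℝ, 1 ≤ B → heightCount h Set.univ B ≤ C3 * B ^ s := by
      intro B hBone
      have hBpos : (0:ℝ) < B := lt_of_lt_of_le one_pos hBone
      have hBs1 : (1:ℝ) ≤ B ^ s := by
        calc (1:ℝ) = 1 ^ s := (Real.one_rpow s).symm
          _ ≤ B ^ s := Real.rpow_le_rpow zero_le_one hBone hs.le
      have hBs0 : (0:ℝ) ≤ B ^ s := zero_le_one.trans hBs1
      rcases le_or_gt B2 B with hcase | hcase
      · calc heightCount h Set.univ B ≤ (C / (L / 2)) * B ^ s := hbig B hcase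
          _ ≤ C3 * B ^ s := by
            apply mul_le_mul_of_nonneg_right _ hBs0
            have : (0:ℝ) ≤ (C / (L / 2)) * B2 ^ s :=
              mul_nonneg hCL0 (Real.rpow_nonneg hB2pos.le _)
            linarith
      · have h1 : heightCount h Set.univ B ≤ heightCount h Set.univ B2 :=
          hmono B B2 hB2pos hcase.le
        have h2 : heightCount h Set.univ B2 ≤ (C / (L / 2)) * B2 ^ s := hbig B2 le_rfl
        have h3 : (C / (L / 2)) * B2 ^ s ≤ C3 * 1 := by
          rw [hC3, mul_one]
          linarith
        have hC30 : (0:ℝ) ≤ C3 := by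
          have : (0:ℝ) ≤ (C / (L / 2)) * B2 ^ s :=
            mul_nonneg hCL0 (Real.rpow_nonneg hB2pos.le _)
          rw [hC3]; linarith
        calc heightCount h Set.univ B ≤ C3 * 1 := le_trans h1 (le_trans h2 h3)
          _ ≤ C3 * B ^ s := mul_le_mul_of_nonneg_left hBs1 hC30
    have hsum' : Summable fun x : U => h x ^ (-s') :=
      summable_of_count_le hh hfin hs.le hss' hbound
    exact ⟨hs.trans hss', hsum'.subtype _⟩
  -- conclude
  unfold convBoundarySet
  apply le_antisymm
  · exact sInf_le_sInf (Set.image_mono hBA)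
  · refine le_sInf ?_
    rintro b ⟨s, hsA, rfl⟩
    refine ENNReal.le_of_forall_pos_le_add fun ε hε _ => ?_
    have hsp := hkey s hsA (s + ε) (by
      have : (0:ℝ) < ε := hε
      linarith)
    calc sInf (ENNReal.ofReal ''
          {s : ℝ | 0 < s ∧ Summable fun x : (Set.univ : Set U) => h x.1 ^ (-s)})
        ≤ ENNReal.ofReal (s + ε) := sInf_le ⟨s + ε, hsp, rfl⟩
      _ = ENNReal.ofReal s + ENNReal.ofReal ε :=
          ENNReal.ofReal_add hsA.1.le ε.coe_nonneg
      _ = ENNReal.ofReal s + ε := by rw [ENNReal.ofReal_coe_nnreal]
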